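/- arXiv:2409.13032 — 4 statements merged into one kernel-verified Lean document; each statement's English description precedes it below -/
import Mathlib

section
/- Let Σ₁, Σ₂ ∈ ℝ^{n×n} be positive semidefinite matrices and r > 0. Then the centered ellipsoid with shape matrix Σ₁ + Σ₂ is contained in the Minkowski sum of the centered ellipsoids: E(Σ₁ + Σ₂, 0, r) ⊆ E(Σ₁, 0, r) ⊕ E(Σ₂, 0, r). -/
open MeasureTheory Matrix Pointwise
open scoped Classical

/-- The positive semidefinite square root of a matrix (junk value `0` if the matrix is not
positive semidefinite). -/
noncomputable def msqrt {n : ℕ} (M : Matrix (Fin n) (Fin n) ℝ) : Matrix (Fin n) (Fin n) ℝ :=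
  if h : M.PosSemidef then
    h.1.eigenvectorUnitary.1 * diagonal (Real.sqrt ∘ h.1.eigenvalues) *
      (star h.1.eigenvectorUnitary : Matrix (Fin n) (Fin n) ℝ)
  else 0

/-- The ellipsoid `E(M, c, r) = {c + M^{1/2} x : xᵀ x ≤ r}` with shape matrix `M`,
center `c` and radius `√r`. -/
noncomputable def ellipsoid {n : ℕ} (M : Matrix (Fin n) (Fin n) ℝ) (c : Fin n → ℝ) (r : ℝ) :
    Set (Fin n → ℝ) :=
  {x | ∃ y : Fin n → ℝ, y ⬝ᵥ y ≤ r ∧ x = c + (msqrt M).mulVec y}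

private lemma msqrt_psd {n : ℕ} {M : Matrix (Fin n) (Fin n) ℝ} (h : M.PosSemidef) :
    (msqrt M).PosSemidef := by
  rw [msqrt, dif_pos h]
  have : (star h.1.eigenvectorUnitary : Matrix (Fin n) (Fin n) ℝ)
      = (h.1.eigenvectorUnitary.1)ᴴ := rfl
  rw [this]
  apply PosSemidef.mul_mul_conjTranspose_same
  rw [posSemidef_diagonal_iff]
  intro i
  exact Real.sqrt_nonneg _

private lemma msqrt_mul_self' {n : ℕ} {M : Matrix (Fin n) (Fin n) ℝ} (h : M.PosSemidef) :
    msqrt M * msqrt M = M := by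
  rw [msqrt, dif_pos h]
  conv_rhs => rw [h.1.spectral_theorem, Unitary.conjStarAlgAut_apply]
  have hU : (star h.1.eigenvectorUnitary : Matrix (Fin n) (Fin n) ℝ) * h.1.eigenvectorUnitary.1
      = 1 := Unitary.coe_star_mul_self _
  set U := h.1.eigenvectorUnitary.1
  set D := diagonal (Real.sqrt ∘ h.1.eigenvalues)
  have : U * D * star U * (U * D * star U) = U * (D * (star U * U) * D) * star U := by
    simp only [Matrix.mul_assoc]
  rw [this]
  erw [hU]
  rw [Matrix.mul_one, diagonal_mul_diagonal]
  congr 2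
  ext i j
  simp only [diagonal_apply]
  split_ifs with hij
  · simp [Real.mul_self_sqrt (h.eigenvalues_nonneg i)]
  · rfl

private lemma dot_self_nonneg' {n : ℕ} (v : Fin n → ℝ) : 0 ≤ v ⬝ᵥ v :=
  Finset.sum_nonneg fun i _ => mul_self_nonneg (v i)

private lemma herm_dot {n : ℕ} {C : Matrix (Fin n) (Fin n) ℝ} (hC : C.IsHermitian)
    (v w : Fin n → ℝ) : v ⬝ᵥ C *ᵥ w = (C *ᵥ v) ⬝ᵥ w := by
  have ht : Cᵀ = C := by
    ext i j
    simpa using congrFun (congrFun hC i) j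
  rw [dotProduct_mulVec, ← mulVec_transpose, ht]

/-- For a symmetric real matrix, `C y` is in the range of `C²`. -/
private lemma exists_sq_eq {n : ℕ} {C : Matrix (Fin n) (Fin n) ℝ} (hC : C.IsHermitian)
    (y : Fin n → ℝ) : ∃ z, C *ᵥ (C *ᵥ z) = C *ᵥ y := by
  set L : (Fin n → ℝ) →ₗ[ℝ] (Fin n → ℝ) := C.mulVecLin
  have hker : LinearMap.ker (L ∘ₗ L) = LinearMap.ker L := by
    apply le_antisymm
    · intro x hx
      have h0 : C *ᵥ (C *ᵥ x) = 0 := hx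
      have : (C *ᵥ x) ⬝ᵥ (C *ᵥ x) = 0 := by
        rw [← herm_dot hC, h0, dotProduct_zero]
      exact dotProduct_self_eq_zero.mp this
    · intro x hx
      have h0 : C *ᵥ x = 0 := hx
      show C *ᵥ (C *ᵥ x) = 0
      rw [h0, mulVec_zero]
  have hle : LinearMap.range (L ∘ₗ L) ≤ LinearMap.range L := by
    rintro _ ⟨x, rfl⟩; exact ⟨L x, rfl⟩
  have hfr : Module.finrank ℝ (LinearMap.range L)
      ≤ Module.finrank ℝ (LinearMap.range (L ∘ₗ L)) := by
    have h1 := LinearMap.finrank_range_add_finrank_ker (L ∘ₗ L)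
    have h2 := LinearMap.finrank_range_add_finrank_ker L
    rw [hker] at h1
    omega
  have heq := Submodule.eq_of_le_of_finrank_le hle hfr
  have : C *ᵥ y ∈ LinearMap.range (L ∘ₗ L) := heq ▸ ⟨y, rfl⟩
  obtain ⟨z, hz⟩ := this
  exact ⟨z, hz⟩

/-- The centered ellipsoid with shape matrix `Σ₁ + Σ₂` is contained in the
Minkowski sum of the two centered ellipsoids: `E(Σ₁ + Σ₂, 0, r) ⊆ E(Σ₁, 0, r) ⊕ E(Σ₂, 0, r)`. -/
theorem ellipsoid_add_subset_minkowski {n : ℕ} (S₁ S₂ : Matrix (Fin n) (Fin n) ℝ)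
    (hS₁ : S₁.PosSemidef) (hS₂ : S₂.PosSemidef) {r : ℝ} (hr : 0 < r) :
    ellipsoid (S₁ + S₂) 0 r ⊆ ellipsoid S₁ 0 r + ellipsoid S₂ 0 r := by
  intro x hx
  obtain ⟨y, hy, hxy⟩ := hx
  have hS : (S₁ + S₂).PosSemidef := hS₁.add hS₂
  set C := msqrt (S₁ + S₂) with hCset
  set A := msqrt S₁ with hAset
  set B := msqrt S₂ with hBset
  have hCps : C.PosSemidef := msqrt_psd hS
  have hAps : A.PosSemidef := msqrt_psd hS₁
  have hBps : B.PosSemidef := msqrt_psd hS₂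
  have hCC : C * C = S₁ + S₂ := msqrt_mul_self' hS
  have hAA : A * A = S₁ := msqrt_mul_self' hS₁
  have hBB : B * B = S₂ := msqrt_mul_self' hS₂
  obtain ⟨z, hz⟩ := exists_sq_eq hCps.isHermitian y
  set u := A *ᵥ z with hu
  set v := B *ᵥ z with hv
  set w := C *ᵥ z with hw
  -- w ⬝ (y - w) = 0
  have hwyw : w ⬝ᵥ (y - w) = 0 := by
    rw [hw, ← herm_dot hCps.isHermitian]
    rw [mulVec_sub]
    have : C *ᵥ y - C *ᵥ w = 0 := by rw [hw, hz, sub_self]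
    rw [this, dotProduct_zero]
  have hwy : w ⬝ᵥ y = w ⬝ᵥ w := by
    have := hwyw
    rw [dotProduct_sub] at this
    linarith
  -- u⬝u + v⬝v = w⬝w
  have huu : u ⬝ᵥ u = z ⬝ᵥ S₁ *ᵥ z := by
    rw [hu, ← herm_dot hAps.isHermitian, mulVec_mulVec, hAA]
  have hvv : v ⬝ᵥ v = z ⬝ᵥ S₂ *ᵥ z := by
    rw [hv, ← herm_dot hBps.isHermitian, mulVec_mulVec, hBB]
  have hsum : u ⬝ᵥ u + v ⬝ᵥ v = w ⬝ᵥ w := by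
    rw [huu, hvv, ← dotProduct_add, ← add_mulVec, ← hCC, ← mulVec_mulVec, ← hw]
    rw [show C *ᵥ w = C *ᵥ y from hz, herm_dot hCps.isHermitian, ← hw, hwy]
  -- w⬝w ≤ y⬝y
  have hyw : (y - w) ⬝ᵥ (y - w) = y ⬝ᵥ y - 2 * (w ⬝ᵥ y) + w ⬝ᵥ w := by
    rw [sub_dotProduct, dotProduct_sub, dotProduct_sub, dotProduct_comm w y]
    ring
  have hww_le : w ⬝ᵥ w ≤ y ⬝ᵥ y := by
    have h0 := dot_self_nonneg' (y - w)
    rw [hyw, hwy] at h0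
    linarith
  have huur : u ⬝ᵥ u ≤ r := by
    have := dot_self_nonneg' v
    linarith
  have hvvr : v ⬝ᵥ v ≤ r := by
    have := dot_self_nonneg' u
    linarith
  refine Set.mem_add.mpr ⟨A *ᵥ u, ⟨u, huur, by simp [hAset]⟩, B *ᵥ v, ⟨v, hvvr, by simp [hBset]⟩, ?_⟩
  rw [hu, hv, mulVec_mulVec, mulVec_mulVec, hAA, hBB, ← add_mulVec, ← hCC, ← mulVec_mulVec,
    ← hw, show C *ᵥ w = C *ᵥ y from hz, hxy]
  simp
end

section
/- Let X = {x ∈ ℝⁿ : fᵢᵀx ≤ bᵢ for all i ∈ I} for a finite index set I, vectors fᵢ ∈ ℝⁿ and scalars bᵢ ∈ ℝ, and let S ⊆ ℝⁿ be a nonempty set such that h_S(fᵢ) := sup_{s∈S} fᵢᵀs is finite for every i ∈ I. Then the Pontryagin difference admits the representation X ⊖ S = {z ∈ ℝⁿ : fᵢᵀz ≤ bᵢ − h_S(fᵢ) for all i ∈ I}. -/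
open Matrix

/-- The Pontryagin difference `X ⊖ Y = {x : ∀ y ∈ Y, x + y ∈ X}`. -/
def pontryaginDiff {E : Type*} [Add E] (X Y : Set E) : Set E :=
  {x | ∀ y ∈ Y, x + y ∈ X}

/-- If `X = {x : fᵢᵀ x ≤ bᵢ, i ∈ I}` is a polyhedron and `S` is a nonempty
set whose support function `h_S(fᵢ) = sup_{s ∈ S} fᵢᵀ s` is finite for every `i`, then
`X ⊖ S = {z : fᵢᵀ z ≤ bᵢ − h_S(fᵢ), i ∈ I}`. -/
theorem pontryaginDiff_polyhedron {n : ℕ} {ι : Type*} [Fintype ι]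
    (f : ι → Fin n → ℝ) (b : ι → ℝ)
    (X : Set (Fin n → ℝ)) (hX : X = {x | ∀ i, f i ⬝ᵥ x ≤ b i})
    (S : Set (Fin n → ℝ)) (hS : S.Nonempty)
    (hbdd : ∀ i, BddAbove ((fun s => f i ⬝ᵥ s) '' S)) :
    pontryaginDiff X S = {z | ∀ i, f i ⬝ᵥ z ≤ b i - sSup ((fun s => f i ⬝ᵥ s) '' S)} := by
  subst hX
  ext z
  constructor
  · intro hz i
    rw [le_sub_iff_add_le]
    have : sSup ((fun s => f i ⬝ᵥ s) '' S) ≤ b i - f i ⬝ᵥ z := by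
      apply csSup_le ((hS.image _))
      rintro _ ⟨s, hs, rfl⟩
      have := hz s hs i
      rw [dotProduct_add] at this
      linarith
    linarith
  · intro hz s hs i
    rw [dotProduct_add]
    have h1 : f i ⬝ᵥ s ≤ sSup ((fun s => f i ⬝ᵥ s) '' S) :=
      le_csSup (hbdd i) ⟨s, hs, rfl⟩
    have := hz i
    linarith
end

section
/- (Recursive feasibility shift lemma.) Let A ∈ ℝ^{n×n}, B ∈ ℝ^{n×m}, K_f ∈ ℝ^{m×n}, and let Z ⊆ ℝⁿ, V ⊆ ℝ^m, Z_f ⊆ ℝⁿ be sets satisfying Z_f ⊆ Z, (A + B K_f) Z_f ⊆ Z_f and K_f Z_f ⊆ V. Let N ≥ 1 and suppose (z_0, …, z_N) and (v_0, …, v_{N−1}) satisfy z_{t+1} = A z_t + B v_t for all t ∈ {0,…,N−1}, z_t ∈ Z for all t ∈ {1,…,N−1}, v_t ∈ V for all t ∈ {0,…,N−1}, and z_N ∈ Z_f. Then the shifted sequences (z_1, …, z_N, (A + B K_f) z_N) and (v_1, …, v_{N−1}, K_f z_N) satisfy the same conditions with initial state z_1: consecutive states obey the dynamics z⁺ = A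 z + B v, the states at steps 1 through N−1 of the shifted sequence lie in Z, all inputs lie in V, and the terminal state (A + B K_f) z_N lies in Z_f. -/
open Matrix

/-- **Recursive feasibility shift lemma.** Given sets `Z, V, Z_f` with
`Z_f ⊆ Z`, `(A + B K_f) Z_f ⊆ Z_f` and `K_f Z_f ⊆ V`, and a feasible pair of sequences
`(z_0, …, z_N)`, `(v_0, …, v_{N−1})` (dynamics, state constraints at steps `1, …, N−1`,
input constraints, terminal constraint), the shifted sequences
`(z_1, …, z_N, (A + B K_f) z_N)` and `(v_1, …, v_{N−1}, K_f z_N)` satisfy the same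
conditions with initial state `z_1`. -/
theorem recursive_feasibility_shift {n m : ℕ}
    (A : Matrix (Fin n) (Fin n) ℝ) (B : Matrix (Fin n) (Fin m) ℝ)
    (Kf : Matrix (Fin m) (Fin n) ℝ)
    (Z : Set (Fin n → ℝ)) (V : Set (Fin m → ℝ)) (Zf : Set (Fin n → ℝ))
    (hZfZ : Zf ⊆ Z)
    (hZfInv : ∀ x ∈ Zf, (A + B * Kf).mulVec x ∈ Zf)
    (hKfZf : ∀ x ∈ Zf, Kf.mulVec x ∈ V)
    (N : ℕ) (hN : 1 ≤ N)
    (z : ℕ → Fin n → ℝ) (v : ℕ → Fin m → ℝ)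
    (hdyn : ∀ t < N, z (t + 1) = A.mulVec (z t) + B.mulVec (v t))
    (hz : ∀ t, 1 ≤ t → t ≤ N - 1 → z t ∈ Z)
    (hv : ∀ t < N, v t ∈ V)
    (hzN : z N ∈ Zf) :
    let z' : ℕ → Fin n → ℝ := fun t => if t < N then z (t + 1) else (A + B * Kf).mulVec (z N)
    let v' : ℕ → Fin m → ℝ := fun t => if t + 1 < N then v (t + 1) else Kf.mulVec (z N)
    (∀ t < N, z' (t + 1) = A.mulVec (z' t) + B.mulVec (v' t)) ∧
      (∀ t, 1 ≤ t → t ≤ N - 1 → z' t ∈ Z) ∧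
      (∀ t < N, v' t ∈ V) ∧
      z' N ∈ Zf := by
  intro z' v'
  refine ⟨?_, ?_, ?_, ?_⟩
  · intro t ht
    by_cases h : t + 1 < N
    · simp only [z', v', if_pos h, if_pos ht]
      exact hdyn (t + 1) h
    · have heq : t + 1 = N := by omega
      simp only [z', v', if_neg h, if_pos ht, heq]
      rw [if_neg (lt_irrefl N), add_mulVec, ← mulVec_mulVec]
  · intro t h1 h2
    have ht : t < N := by omega
    simp only [z', if_pos ht]
    by_cases h : t + 1 ≤ N - 1
    · exact hz (t + 1) (by omega) h
    · have : t + 1 = N := by omega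
      rw [this]; exact hZfZ hzN
  · intro t ht
    by_cases h : t + 1 < N
    · simp only [v', if_pos h]; exact hv (t + 1) h
    · simp only [v', if_neg h]; exact hKfZf _ hzN
  · simp only [z', lt_irrefl, if_neg (lt_irrefl N)]
    exact hZfInv _ hzN
end

section
/- (Value function decrease.) Let A ∈ ℝ^{n×n}, B ∈ ℝ^{n×m}, K_f ∈ ℝ^{m×n}, let Q ∈ ℝ^{n×n}, P ∈ ℝ^{n×n} be symmetric positive definite and R ∈ ℝ^{m×m} symmetric positive definite, and define ℓ(z,v) = zᵀQz + vᵀRv and V_f(z) = zᵀPz. Let Z ⊆ ℝⁿ, V ⊆ ℝ^m, Z_f ⊆ ℝⁿ satisfy Z_f ⊆ Z, (A + B K_f) Z_f ⊆ Z_f, K_f Z_f ⊆ V, and the terminal cost condition V_f((A + B K_f) z) + ℓ(z, K_f z) ≤ V_f(z) for all z ∈ Z_f. For N ≥ 1, call (z_0,…,z_N; v_0,…,v_{N−1}) feasible at z if z_0 = z, z_{t+1} = A z_t + B v_t, z_t ∈ Z for t ∈ {1,…,N−1}, v_t ∈ V for t ∈ {0,…,N−1}, and z_N ∈ Z_f;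 its cost is J_N = Σ_{t=0}^{N−1} ℓ(z_t, v_t) + V_f(z_N), and V_N⋆(z) denotes the infimum of J_N over feasible sequences at z. Then for any sequence (z_0,…,z_N; v_0,…,v_{N−1}) feasible at z_0, one has V_N⋆(A z_0 + B v_0) ≤ J_N − ℓ(z_0, v_0). -/
open Matrix

/-- A pair of sequences `(zs, vs)` is feasible at `z0` for horizon `N`: initial condition,
dynamics, state constraints at steps `1, …, N−1`, input constraints at steps `0, …, N−1`,
and terminal constraint `zs N ∈ Zf`. -/
def Feasible {n m : ℕ} (A : Matrix (Fin n) (Fin n) ℝ) (B : Matrix (Fin n) (Fin m) ℝ)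
    (Z : Set (Fin n → ℝ)) (V : Set (Fin m → ℝ)) (Zf : Set (Fin n → ℝ)) (N : ℕ)
    (z0 : Fin n → ℝ) (zs : ℕ → Fin n → ℝ) (vs : ℕ → Fin m → ℝ) : Prop :=
  zs 0 = z0 ∧ (∀ t < N, zs (t + 1) = A.mulVec (zs t) + B.mulVec (vs t)) ∧
    (∀ t, 1 ≤ t → t ≤ N - 1 → zs t ∈ Z) ∧ (∀ t < N, vs t ∈ V) ∧ zs N ∈ Zf

/-- The cost `J_N = Σ_{t=0}^{N−1} (z_tᵀ Q z_t + v_tᵀ R v_t) + z_Nᵀ P z_N` of a pair of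
sequences. -/
noncomputable def seqCost {n m : ℕ} (Q : Matrix (Fin n) (Fin n) ℝ)
    (R : Matrix (Fin m) (Fin m) ℝ) (P : Matrix (Fin n) (Fin n) ℝ) (N : ℕ)
    (zs : ℕ → Fin n → ℝ) (vs : ℕ → Fin m → ℝ) : ℝ :=
  (∑ t ∈ Finset.range N, (zs t ⬝ᵥ Q.mulVec (zs t) + vs t ⬝ᵥ R.mulVec (vs t))) +
    zs N ⬝ᵥ P.mulVec (zs N)

/-- The optimal value `V_N⋆(z)`: the infimum of the costs of feasible sequences at `z`. -/
noncomputable def Vstar {n m : ℕ} (A : Matrix (Fin n) (Fin n) ℝ) (B : Matrix (Fin n) (Fin m) ℝ)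
    (Q : Matrix (Fin n) (Fin n) ℝ) (R : Matrix (Fin m) (Fin m) ℝ)
    (P : Matrix (Fin n) (Fin n) ℝ)
    (Z : Set (Fin n → ℝ)) (V : Set (Fin m → ℝ)) (Zf : Set (Fin n → ℝ)) (N : ℕ)
    (z : Fin n → ℝ) : ℝ :=
  sInf {c | ∃ zs vs, Feasible A B Z V Zf N z zs vs ∧ c = seqCost Q R P N zs vs}

/-- **Value function decrease.** Under the standard terminal ingredients
(`Z_f ⊆ Z`, invariance of `Z_f` under the terminal feedback `K_f`, `K_f Z_f ⊆ V`, and the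
terminal cost decrease condition), for any sequence feasible at `z_0` with first input `v_0`,
`V_N⋆(A z_0 + B v_0) ≤ J_N − ℓ(z_0, v_0)`. -/
theorem value_function_decrease {n m : ℕ}
    (A : Matrix (Fin n) (Fin n) ℝ) (B : Matrix (Fin n) (Fin m) ℝ)
    (Kf : Matrix (Fin m) (Fin n) ℝ)
    (Q P : Matrix (Fin n) (Fin n) ℝ) (R : Matrix (Fin m) (Fin m) ℝ)
    (hQ : Q.PosDef) (hP : P.PosDef) (hR : R.PosDef)
    (Z : Set (Fin n → ℝ)) (V : Set (Fin m → ℝ)) (Zf : Set (Fin n → ℝ))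
    (hZfZ : Zf ⊆ Z)
    (hZfInv : ∀ x ∈ Zf, (A + B * Kf).mulVec x ∈ Zf)
    (hKfZf : ∀ x ∈ Zf, Kf.mulVec x ∈ V)
    (hTermCost : ∀ x ∈ Zf,
      ((A + B * Kf).mulVec x) ⬝ᵥ P.mulVec ((A + B * Kf).mulVec x) +
        (x ⬝ᵥ Q.mulVec x + (Kf.mulVec x) ⬝ᵥ R.mulVec (Kf.mulVec x)) ≤ x ⬝ᵥ P.mulVec x)
    (N : ℕ) (hN : 1 ≤ N)
    (z0 : Fin n → ℝ) (zs : ℕ → Fin n → ℝ) (vs : ℕ → Fin m → ℝ)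
    (hfeas : Feasible A B Z V Zf N z0 zs vs) :
    Vstar A B Q R P Z V Zf N (A.mulVec z0 + B.mulVec (vs 0)) ≤
      seqCost Q R P N zs vs - (z0 ⬝ᵥ Q.mulVec z0 + vs 0 ⬝ᵥ R.mulVec (vs 0)) := by

  obtain ⟨hz0, hdyn, hstate, hinput, hterm⟩ := hfeas
  obtain ⟨K, rfl⟩ : ∃ K, N = K + 1 := ⟨N - 1, (Nat.succ_pred_eq_of_pos hN).symm⟩
  -- shifted sequences
  set zs' : ℕ → Fin n → ℝ :=
    fun t => if t < K + 1 then zs (t + 1) else (A + B * Kf).mulVec (zs (K + 1)) with hzs'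
  set vs' : ℕ → Fin m → ℝ :=
    fun t => if t < K then vs (t + 1) else Kf.mulVec (zs (K + 1)) with hvs'
  have hQ0 : ∀ x, (0:ℝ) ≤ x ⬝ᵥ Q.mulVec x := fun x => by simpa using hQ.posSemidef.dotProduct_mulVec_nonneg x
  have hP0 : ∀ x, (0:ℝ) ≤ x ⬝ᵥ P.mulVec x := fun x => by simpa using hP.posSemidef.dotProduct_mulVec_nonneg x
  have hR0 : ∀ x, (0:ℝ) ≤ x ⬝ᵥ R.mulVec x := fun x => by simpa using hR.posSemidef.dotProduct_mulVec_nonneg x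
  have hbdd : BddBelow {c | ∃ zs₁ vs₁,
      Feasible A B Z V Zf (K + 1) (A.mulVec z0 + B.mulVec (vs 0)) zs₁ vs₁ ∧
        c = seqCost Q R P (K + 1) zs₁ vs₁} := by
    refine ⟨0, ?_⟩
    rintro c ⟨zs₁, vs₁, -, rfl⟩
    unfold seqCost
    have : ∀ t ∈ Finset.range (K + 1),
        (0:ℝ) ≤ zs₁ t ⬝ᵥ Q.mulVec (zs₁ t) + vs₁ t ⬝ᵥ R.mulVec (vs₁ t) :=
      fun t _ => add_nonneg (hQ0 _) (hR0 _)
    exact add_nonneg (Finset.sum_nonneg this) (hP0 _)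
  have hfeas' : Feasible A B Z V Zf (K + 1) (A.mulVec z0 + B.mulVec (vs 0)) zs' vs' := by
    refine ⟨?_, ?_, ?_, ?_, ?_⟩
    · simp only [hzs', if_pos (Nat.succ_pos K)]
      rw [hdyn 0 (Nat.succ_pos K), hz0]
    · intro t ht
      rcases lt_or_eq_of_le (Nat.lt_succ_iff.mp ht) with h | h
      · simp only [hzs', hvs', if_pos (by omega : t + 1 < K + 1),
          if_pos (by omega : t < K + 1), if_pos h]
        exact hdyn (t + 1) (by omega)
      · rw [h]
        simp only [hzs', hvs', if_neg (lt_irrefl (K + 1)), if_pos (Nat.lt_succ_self K),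
          if_neg (lt_irrefl K)]
        simp [Matrix.add_mulVec, Matrix.mulVec_mulVec]
    · intro t ht1 ht2
      have ht2' : t ≤ K := by omega
      simp only [hzs', if_pos (by omega : t < K + 1)]
      rcases lt_or_eq_of_le ht2' with h | h
      · exact hstate (t + 1) (by omega) (by omega)
      · rw [h]
        exact hZfZ hterm
    · intro t ht
      rcases lt_or_eq_of_le (Nat.lt_succ_iff.mp ht) with h | h
      · simp only [hvs', if_pos h]
        exact hinput (t + 1) (by omega)
      · rw [h]
        simp only [hvs', if_neg (lt_irrefl K)]
        exact hKfZf _ hterm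
    · simp only [hzs', if_neg (lt_irrefl (K + 1))]
      exact hZfInv _ hterm
  have hmem : seqCost Q R P (K + 1) zs' vs' ∈ {c | ∃ zs₁ vs₁,
      Feasible A B Z V Zf (K + 1) (A.mulVec z0 + B.mulVec (vs 0)) zs₁ vs₁ ∧
        c = seqCost Q R P (K + 1) zs₁ vs₁} := ⟨zs', vs', hfeas', rfl⟩
  have h1 : Vstar A B Q R P Z V Zf (K + 1) (A.mulVec z0 + B.mulVec (vs 0)) ≤
      seqCost Q R P (K + 1) zs' vs' := csInf_le hbdd hmem
  refine h1.trans ?_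
  -- cost comparison
  have hcost' : seqCost Q R P (K + 1) zs' vs' =
      (∑ t ∈ Finset.range K,
        (zs (t + 1) ⬝ᵥ Q.mulVec (zs (t + 1)) + vs (t + 1) ⬝ᵥ R.mulVec (vs (t + 1)))) +
      (zs (K + 1) ⬝ᵥ Q.mulVec (zs (K + 1)) +
        Kf.mulVec (zs (K + 1)) ⬝ᵥ R.mulVec (Kf.mulVec (zs (K + 1)))) +
      ((A + B * Kf).mulVec (zs (K + 1))) ⬝ᵥ P.mulVec ((A + B * Kf).mulVec (zs (K + 1))) := by
    unfold seqCost
    rw [Finset.sum_range_succ]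
    have hsum : ∀ t ∈ Finset.range K,
        zs' t ⬝ᵥ Q.mulVec (zs' t) + vs' t ⬝ᵥ R.mulVec (vs' t) =
        zs (t + 1) ⬝ᵥ Q.mulVec (zs (t + 1)) + vs (t + 1) ⬝ᵥ R.mulVec (vs (t + 1)) := by
      intro t ht
      rw [Finset.mem_range] at ht
      simp only [hzs', hvs', if_pos (by omega : t < K + 1), if_pos ht]
    rw [Finset.sum_congr rfl hsum]
    simp only [hzs', hvs', if_pos (Nat.lt_succ_self K), if_neg (lt_irrefl K),
      if_neg (lt_irrefl (K + 1))]
  have hcost : seqCost Q R P (K + 1) zs vs =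
      (z0 ⬝ᵥ Q.mulVec z0 + vs 0 ⬝ᵥ R.mulVec (vs 0)) +
      (∑ t ∈ Finset.range K,
        (zs (t + 1) ⬝ᵥ Q.mulVec (zs (t + 1)) + vs (t + 1) ⬝ᵥ R.mulVec (vs (t + 1)))) +
      zs (K + 1) ⬝ᵥ P.mulVec (zs (K + 1)) := by
    unfold seqCost
    rw [Finset.sum_range_succ']
    rw [hz0]
    ring
  have hT := hTermCost (zs (K + 1)) hterm
  rw [hcost', hcost]
  linarith
end
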